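/- If a signed graph whose underlying unsigned graph has maximum degree at most 3 (subcubic) possesses any defensive alliance, then it possesses a defensive alliance of size at most 2. -/

import Mathlib

open Set

variable {V : Type*}

/-- Number of `G`-neighbors of `v` inside the set `S`. -/
noncomputable def ndegOn (G : SimpleGraph V) (S : Set V) (v : V) : ℕ := (S ∩ {u | G.Adj v u}).ncard

/-- Total number of `G`-neighbors of `v`. -/
noncomputable def ndeg (G : SimpleGraph V) (v : V) : ℕ := {u | G.Adj v u}.ncard

/-- `S` is a defensive alliance in the signed graph `(V, Gp, Gn)`. -/
def IsDefAlliance (Gp Gn : SimpleGraph V) (S : Set V) : Prop :=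
  S.Nonempty ∧ ∀ v ∈ S,
    ndegOn Gn S v ≤ ndegOn Gp S v + 1 ∧ ndegOn Gn Sᶜ v ≤ ndegOn Gp S v + 1

/-- Defensive alliance number: minimum size of a defensive alliance. -/
noncomputable def asd (Gp Gn : SimpleGraph V) : ℕ :=
  sInf {n | ∃ S : Set V, IsDefAlliance Gp Gn S ∧ S.ncard = n}

/-!
If some edge `vw` is positive, then `{v, w}` is an alliance: each endpoint has a positive neighbour
inside, no negative one inside (the graphs are disjoint), and, the degree being at most 3, at most
two negative neighbours outside. Otherwise there are no positive edges, so every member of an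
alliance `S` has at most one negative neighbour in `S` and at most one outside, hence negative
degree at most 2. A member `v` with a neighbour `w ∈ S` then forms the alliance `{v, w}`; a member
without one has degree at most 1 and forms the alliance `{v}` on its own.
-/

lemma Set.ncard_pair_le {α : Type*} (a b : α) : ({a, b} : Set α).ncard ≤ 2 :=
  (ncard_insert_le _ _).trans (by simp)

def DefendsIn (Gp Gn : SimpleGraph V) (S : Set V) (v : V) : Prop :=
  ndegOn Gn S v ≤ ndegOn Gp S v + 1 ∧ ndegOn Gn Sᶜ v ≤ ndegOn Gp S v + 1

section Degrees

variable (G : SimpleGraph V)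

@[simp]
lemma ndegOn_bot (S : Set V) (v : V) : ndegOn ⊥ S v = 0 := by
  simp [ndegOn]

@[simp]
lemma ndegOn_singleton_self (v : V) : ndegOn G {v} v = 0 := by
  simp [ndegOn]

lemma ndegOn_pair_of_adj {v w : V} (h : G.Adj v w) : ndegOn G {v, w} v = 1 := by
  have : ({v, w} : Set V) ∩ {u | G.Adj v u} = {w} := by
    ext u
    constructor
    · rintro ⟨rfl | rfl, hu⟩
      exacts [absurd hu (G.loopless.irrefl _), rfl]
    · rintro rfl
      exact ⟨Or.inr rfl, h⟩
  rw [ndegOn, this, ncard_singleton]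

lemma ndegOn_pair_of_not_adj {v w : V} (h : ¬G.Adj v w) : ndegOn G {v, w} v = 0 := by
  have : ({v, w} : Set V) ∩ {u | G.Adj v u} = ∅ := by
    ext u
    simp only [mem_inter_iff, mem_insert_iff, mem_singleton_iff, mem_ofPred_eq,
      mem_empty_iff_false, iff_false, not_and]
    rintro (rfl | rfl)
    exacts [G.loopless.irrefl _, h]
  rw [ndegOn, this, ncard_empty]

lemma ndegOn_eq_zero_of_forall_not_adj {S : Set V} {v : V} (h : ∀ w ∈ S, ¬G.Adj v w) :
    ndegOn G S v = 0 := by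
  have : S ∩ {u | G.Adj v u} = ∅ := eq_empty_iff_forall_notMem.2 fun w hw => h w hw.1 hw.2
  rw [ndegOn, this, ncard_empty]

variable [Finite V]

lemma ndegOn_le_ndeg (S : Set V) (v : V) : ndegOn G S v ≤ ndeg G v :=
  ncard_le_ncard inter_subset_right (toFinite _)

lemma ndegOn_add_ndegOn_compl (S : Set V) (v : V) :
    ndegOn G S v + ndegOn G Sᶜ v = ndeg G v := by
  rw [ndegOn, ndegOn, ← ncard_union_eq (disjoint_compl_right.mono inter_subset_left inter_subset_left),
    ← union_inter_distrib_right, union_compl_self, univ_inter, ndeg]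

lemma ndeg_add_ndeg_of_disjoint {G' : SimpleGraph V} (h : Disjoint G G') (v : V) :
    ndeg G v + ndeg G' v = ndeg (G ⊔ G') v := by
  rw [ndeg, ndeg, ndeg, ← ncard_union_eq]
  · rfl
  · exact disjoint_left.2 fun u hu hu' => SimpleGraph.disjoint_left.1 h v u hu hu'

end Degrees

section Alliances

variable {Gp Gn : SimpleGraph V}

lemma isDefAlliance_singleton [Finite V] {v : V} (hv : ndeg Gn v ≤ 1) :
    IsDefAlliance Gp Gn {v} := by
  refine ⟨singleton_nonempty v, ?_⟩
  rintro x rfl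
  have := ndegOn_add_ndegOn_compl Gn {x} x
  rw [ndegOn_singleton_self, ndegOn_singleton_self] at *
  constructor <;> omega

lemma isDefAlliance_pair {v w : V} (hv : DefendsIn Gp Gn {v, w} v)
    (hw : DefendsIn Gp Gn {w, v} w) : IsDefAlliance Gp Gn {v, w} := by
  refine ⟨insert_nonempty _ _, ?_⟩
  rintro x (rfl | rfl)
  · exact hv
  · rwa [pair_comm]

lemma defendsIn_pair_of_adj_pos [Finite V] {v w : V} (h : Gp.Adj v w) (hn : ¬Gn.Adj v w)
    (hv : ndeg Gn v ≤ 2) : DefendsIn Gp Gn {v, w} v := by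
  have := ndegOn_le_ndeg Gn {v, w}ᶜ v
  rw [DefendsIn, ndegOn_pair_of_adj Gp h, ndegOn_pair_of_not_adj Gn hn]
  constructor <;> omega

lemma defendsIn_pair_of_adj_neg [Finite V] {v w : V} (h : Gn.Adj v w) (hv : ndeg Gn v ≤ 2) :
    DefendsIn Gp Gn {v, w} v := by
  have := ndegOn_add_ndegOn_compl Gn {v, w} v
  rw [DefendsIn, ndegOn_pair_of_adj Gn h] at *
  constructor <;> omega

lemma ndeg_neg_le_two_of_adj_pos [Finite V] (hdisj : Disjoint Gp Gn) {v w : V}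
    (hv : ndeg (Gp ⊔ Gn) v ≤ 3) (h : Gp.Adj v w) : ndeg Gn v ≤ 2 := by
  have hpos : 1 ≤ ndeg Gp v := (ncard_pos (toFinite _)).2 ⟨w, h⟩
  have hsum := ndeg_add_ndeg_of_disjoint Gp hdisj v
  omega

lemma isDefAlliance_pair_of_adj_pos [Finite V] (hdisj : Disjoint Gp Gn)
    (hsub : ∀ v, ndeg (Gp ⊔ Gn) v ≤ 3) {v w : V} (h : Gp.Adj v w) :
    IsDefAlliance Gp Gn {v, w} :=
  isDefAlliance_pair
    (defendsIn_pair_of_adj_pos h (SimpleGraph.disjoint_left.1 hdisj v w h)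
      (ndeg_neg_le_two_of_adj_pos hdisj (hsub v) h))
    (defendsIn_pair_of_adj_pos h.symm (SimpleGraph.disjoint_left.1 hdisj w v h.symm)
      (ndeg_neg_le_two_of_adj_pos hdisj (hsub w) h.symm))

variable [Finite V] {S : Set V}

lemma IsDefAlliance.ndeg_le_two_of_bot (hS : IsDefAlliance ⊥ Gn S) {v : V} (hv : v ∈ S) :
    ndeg Gn v ≤ 2 := by
  have hsplit := ndegOn_add_ndegOn_compl Gn S v
  have hdef := hS.2 v hv
  simp only [ndegOn_bot] at hdef
  omega

lemma IsDefAlliance.ndeg_le_one_of_bot (hS : IsDefAlliance ⊥ Gn S) {v : V} (hv : v ∈ S)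
    (hnbr : ∀ w ∈ S, ¬Gn.Adj v w) : ndeg Gn v ≤ 1 := by
  have hsplit := ndegOn_add_ndegOn_compl Gn S v
  have hout := (hS.2 v hv).2
  rw [ndegOn_eq_zero_of_forall_not_adj Gn hnbr] at hsplit
  rw [ndegOn_bot] at hout
  omega

end Alliances

theorem stmt8 [Fintype V] (Gp Gn : SimpleGraph V) (hdisj : Disjoint Gp Gn)
    (hsub : ∀ v : V, ndeg (Gp ⊔ Gn) v ≤ 3)
    (hex : ∃ S : Set V, IsDefAlliance Gp Gn S) :
    ∃ S : Set V, IsDefAlliance Gp Gn S ∧ S.ncard ≤ 2 := by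
  by_cases hGp : Gp = ⊥
  · subst hGp
    obtain ⟨S, hS⟩ := hex
    obtain ⟨v, hv⟩ := hS.1
    by_cases hnbr : ∀ w ∈ S, ¬Gn.Adj v w
    · exact ⟨{v}, isDefAlliance_singleton (hS.ndeg_le_one_of_bot hv hnbr), by simp⟩
    · obtain ⟨w, hw, hvw⟩ := not_forall₂.1 hnbr
      exact ⟨{v, w}, isDefAlliance_pair
        (defendsIn_pair_of_adj_neg (not_not.1 hvw) (hS.ndeg_le_two_of_bot hv))
        (defendsIn_pair_of_adj_neg (not_not.1 hvw).symm (hS.ndeg_le_two_of_bot hw)),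
        ncard_pair_le v w⟩
  · obtain ⟨v, w, h⟩ := SimpleGraph.ne_bot_iff_exists_adj.1 hGp
    exact ⟨{v, w}, isDefAlliance_pair_of_adj_pos hdisj hsub h, ncard_pair_le v w⟩
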